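/- Analyticity. For each 0 ≤ a ≤ b ≤ 1 and each integer n ≥ 0, the function k ↦ S_n^{(a,b)}(k) is entire (holomorphic on all of ℂ), and the series ∑_{n=0}^{∞} S_n^{(a,b)}(k) converges uniformly on compact subsets of ℂ; consequently Δ : ℂ → ℂ is an entire function. -/

import Mathlib

open MeasureTheory Filter

noncomputable section

/-- Nodes of the simplex: `y₀ = a`, `y_{n+1} = b`, interior nodes from `y`. -/
def nodes (a b : ℝ) (n : ℕ) (y : Fin n → ℝ) (p : ℕ) : ℝ :=
  if h : 1 ≤ p ∧ p ≤ n then y ⟨p - 1, by omega⟩ else if p = 0 then a else b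

/-- The ordered simplex `a ≤ y₁ ≤ ⋯ ≤ y_n ≤ b`. -/
def simplex (a b : ℝ) (n : ℕ) : Set (Fin n → ℝ) :=
  {y | Monotone y ∧ ∀ i, y i ∈ Set.Icc a b}

/-- The alternating phase `∑_{p=0}^{n} (−1)^p ∫_{y_p}^{y_{p+1}} dξ/σ(ξ)`. -/
def phase (σ : ℝ → ℝ) (a b : ℝ) (n : ℕ) (y : Fin n → ℝ) : ℝ :=
  ∑ p ∈ Finset.range (n + 1),
    (-1 : ℝ) ^ p * ∫ ξ in (nodes a b n y p)..(nodes a b n y (p + 1)), 1 / σ ξ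

/-- The integrand defining `S_n^{(a,b)}(k)`. -/
def Sintegrand (σ : ℝ → ℝ) (a b : ℝ) (n : ℕ) (k : ℂ) (y : Fin n → ℝ) : ℂ :=
  ((∏ p, deriv σ (y p) / σ (y p) : ℝ) : ℂ) * Complex.sin (k * ((phase σ a b n y : ℝ) : ℂ))

/-- `S_n^{(a,b)}(k)`. -/
def S (σ : ℝ → ℝ) (a b : ℝ) (n : ℕ) (k : ℂ) : ℂ :=
  ((2 : ℂ) ^ n)⁻¹ * ∫ y in simplex a b n, Sintegrand σ a b n k y

/-- `Δ(k) = ∑_{n=0}^∞ S_n^{(0,1)}(k)`. -/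
def Δfun (σ : ℝ → ℝ) (k : ℂ) : ℂ := ∑' n, S σ 0 1 n k

/-- `σ` is absolutely continuous on `[0,1]`: fundamental-theorem-of-calculus
characterization with integrable derivative. -/
def sigmaAC (σ : ℝ → ℝ) : Prop :=
  IntegrableOn (deriv σ) (Set.Icc 0 1) ∧
    ∀ x ∈ Set.Icc (0 : ℝ) 1, σ x = σ 0 + ∫ t in (0 : ℝ)..x, deriv σ t

/-!
On the ordered simplex, `S_n^{(a,b)}(k)` is `2⁻ⁿ` times the integral of the amplitude
`∏ σ'(y_p)/σ(y_p)` against `sin (k · phase)`, and the phase is bounded by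
`(n + 1) (b - a) / min σ`. Differentiation under the integral sign makes every `S_n` entire.
The simplex is one of `n!` almost disjoint images of itself under permutations of the
coordinates, so the amplitude has `L¹` norm at most `‖σ'/σ‖₁ⁿ / n!`; hence on `‖k‖ ≤ R` the
terms are bounded by `E (‖σ'/σ‖₁ E / 2)ⁿ / n!` with `E = exp (R (b - a) / min σ)`. The
Weierstrass M-test gives locally uniform convergence, and Weierstrass' theorem on uniform limits
of holomorphic functions makes `Δ` entire.
-/

open Set
open scoped Nat

namespace Complex

lemma norm_exp_mul_I_le (z : ℂ) : ‖exp (z * I)‖ ≤ Real.exp ‖z‖ := by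
  simpa using norm_exp_le_exp_norm (z * I)

lemma norm_exp_neg_mul_I_le (z : ℂ) : ‖exp (-z * I)‖ ≤ Real.exp ‖z‖ := by
  simpa using norm_exp_mul_I_le (-z)

lemma norm_sin_le_exp_norm (z : ℂ) : ‖sin z‖ ≤ Real.exp ‖z‖ := by
  rw [sin, norm_div, norm_mul, norm_I, mul_one, RCLike.norm_ofNat]
  linarith [norm_sub_le (exp (-z * I)) (exp (z * I)), norm_exp_mul_I_le z, norm_exp_neg_mul_I_le z]

lemma norm_cos_le_exp_norm (z : ℂ) : ‖cos z‖ ≤ Real.exp ‖z‖ := by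
  rw [cos, norm_div, RCLike.norm_ofNat]
  linarith [norm_add_le (exp (z * I)) (exp (-z * I)), norm_exp_mul_I_le z, norm_exp_neg_mul_I_le z]

lemma norm_mul_ofReal_le {k : ℂ} {t B : ℝ} (ht : |t| ≤ B) : ‖k * t‖ ≤ ‖k‖ * B := by
  rw [norm_mul, norm_real, Real.norm_eq_abs]
  gcongr

lemma norm_sin_mul_ofReal_le {t B : ℝ} (ht : |t| ≤ B) (k : ℂ) :
    ‖sin (k * t)‖ ≤ Real.exp (‖k‖ * B) :=
  (norm_sin_le_exp_norm _).trans (Real.exp_le_exp.2 (norm_mul_ofReal_le ht))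

lemma norm_cos_mul_ofReal_le {t B : ℝ} (ht : |t| ≤ B) (k : ℂ) :
    ‖cos (k * t)‖ ≤ Real.exp (‖k‖ * B) :=
  (norm_cos_le_exp_norm _).trans (Real.exp_le_exp.2 (norm_mul_ofReal_le ht))

end Complex

section SineTransform

variable {α : Type*} [MeasurableSpace α] {μ : Measure α} {P : α → ℂ} {θ : α → ℝ} {B : ℝ}

lemma aestronglyMeasurable_mul_sin (hP : Integrable P μ) (hθ : AEStronglyMeasurable θ μ)
    (k : ℂ) : AEStronglyMeasurable (fun y => P y * Complex.sin (k * θ y)) μ :=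
  hP.aestronglyMeasurable.mul <| Complex.continuous_sin.comp_aestronglyMeasurable <|
    (Complex.continuous_ofReal.comp_aestronglyMeasurable hθ).const_mul k

lemma integrable_mul_sin (hP : Integrable P μ) (hθ : AEStronglyMeasurable θ μ)
    (hB : ∀ᵐ y ∂μ, |θ y| ≤ B) (k : ℂ) : Integrable (fun y => P y * Complex.sin (k * θ y)) μ :=
  (hP.norm.mul_const (Real.exp (‖k‖ * B))).mono' (aestronglyMeasurable_mul_sin hP hθ k) <|
    hB.mono fun y hy => by
      rw [norm_mul]
      exact mul_le_mul_of_nonneg_left (Complex.norm_sin_mul_ofReal_le hy k) (norm_nonneg _)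

lemma norm_integral_mul_sin_le (hP : Integrable P μ) (hB : ∀ᵐ y ∂μ, |θ y| ≤ B) (k : ℂ) :
    ‖∫ y, P y * Complex.sin (k * θ y) ∂μ‖ ≤ (∫ y, ‖P y‖ ∂μ) * Real.exp (‖k‖ * B) := by
  rw [← integral_mul_const]
  refine norm_integral_le_of_norm_le (hP.norm.mul_const _) (hB.mono fun y hy => ?_)
  rw [norm_mul]
  exact mul_le_mul_of_nonneg_left (Complex.norm_sin_mul_ofReal_le hy k) (norm_nonneg _)

lemma hasDerivAt_integral_mul_sin (hP : Integrable P μ) (hθ : AEStronglyMeasurable θ μ)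
    (hB : ∀ᵐ y ∂μ, |θ y| ≤ B) (k₀ : ℂ) :
    HasDerivAt (fun k => ∫ y, P y * Complex.sin (k * θ y) ∂μ)
      (∫ y, P y * (Complex.cos (k₀ * θ y) * θ y) ∂μ) k₀ := by
  have hθ' : AEStronglyMeasurable (fun y => (θ y : ℂ)) μ :=
    Complex.continuous_ofReal.comp_aestronglyMeasurable hθ
  refine (hasDerivAt_integral_of_dominated_loc_of_deriv_le (Metric.ball_mem_nhds k₀ one_pos)
    (F' := fun k y => P y * (Complex.cos (k * θ y) * θ y))
    (bound := fun y => ‖P y‖ * (Real.exp ((‖k₀‖ + 1) * B) * B))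
    (Eventually.of_forall (aestronglyMeasurable_mul_sin hP hθ)) (integrable_mul_sin hP hθ hB k₀)
    (hP.aestronglyMeasurable.mul ((Complex.continuous_cos.comp_aestronglyMeasurable
      (hθ'.const_mul k₀)).mul hθ')) ?_ (hP.norm.mul_const _) ?_).2
  · filter_upwards [hB] with y hy k hk
    have hk_le : ‖k‖ ≤ ‖k₀‖ + 1 := by
      simpa using (norm_le_norm_add_norm_sub' k k₀).trans
        (add_le_add_right (mem_ball_iff_norm.1 hk).le _)
    have hB0 : 0 ≤ B := (abs_nonneg _).trans hy
    rw [norm_mul, norm_mul, Complex.norm_real, Real.norm_eq_abs]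
    gcongr
    exact (Complex.norm_cos_mul_ofReal_le hy k).trans (Real.exp_le_exp.2 (by gcongr))
  · exact ae_of_all _ fun y k _ =>
      ((Complex.hasDerivAt_sin _).comp k (hasDerivAt_mul_const _)).const_mul _

lemma differentiable_integral_mul_sin (hP : Integrable P μ) (hθ : AEStronglyMeasurable θ μ)
    (hB : ∀ᵐ y ∂μ, |θ y| ≤ B) : Differentiable ℂ fun k => ∫ y, P y * Complex.sin (k * θ y) ∂μ :=
  fun k => (hasDerivAt_integral_mul_sin hP hθ hB k).differentiableAt

end SineTransform

lemma isClosed_setOf_monotone (n : ℕ) : IsClosed {y : Fin n → ℝ | Monotone y} := by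
  simp only [Monotone, ofPred_forall]
  exact isClosed_iInter fun i => isClosed_iInter fun j => isClosed_iInter fun _ =>
    isClosed_le (continuous_apply i) (continuous_apply j)

lemma volume_setOf_apply_eq {n : ℕ} {i j : Fin n} (hij : i ≠ j) :
    volume {y : Fin n → ℝ | y i = y j} = 0 := by
  let L : (Fin n → ℝ) →ₗ[ℝ] ℝ := (LinearMap.proj i : (Fin n → ℝ) →ₗ[ℝ] ℝ) - LinearMap.proj j
  have hL : LinearMap.ker L ≠ ⊤ := fun h => by
    have : Pi.single i 1 ∈ LinearMap.ker L := h ▸ Submodule.mem_top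
    simp [L, hij.symm] at this
  convert Measure.addHaar_submodule volume _ hL using 2
  ext y
  simp [L, sub_eq_zero]

lemma ae_injective (n : ℕ) : ∀ᵐ y : Fin n → ℝ, Function.Injective y := by
  have : {y : Fin n → ℝ | ¬ Function.Injective y} ⊆ ⋃ (i) (j) (_ : i ≠ j), {y | y i = y j} := by
    intro y hy
    simp only [Function.Injective, not_forall] at hy
    obtain ⟨i, j, hyij, hij⟩ := hy
    exact mem_iUnion₂.2 ⟨i, j, mem_iUnion.2 ⟨hij, hyij⟩⟩
  exact measure_mono_null this (measure_iUnion_null fun i => measure_iUnion_null fun j =>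
    measure_iUnion_null fun hij => volume_setOf_apply_eq hij)

section Simplex

variable {n : ℕ} (g : ℝ → ℝ)

lemma setIntegral_monotone_comp_perm (τ : Equiv.Perm (Fin n)) :
    ∫ y in {y : Fin n → ℝ | Monotone (y ∘ τ)}, ∏ p, g (y p) =
      ∫ y in {y : Fin n → ℝ | Monotone y}, ∏ p, g (y p) := by
  let T := MeasurableEquiv.piCongrLeft (fun _ : Fin n => ℝ) τ
  have hT : ∀ x : Fin n → ℝ, T x ∘ τ = x := fun x =>
    funext fun i => Equiv.piCongrLeft_apply_apply (fun _ => ℝ) τ x i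
  rw [← (volume_measurePreserving_piCongrLeft (fun _ : Fin n => ℝ) τ).setIntegral_preimage_emb
    T.measurableEmbedding]
  have hpre : T ⁻¹' {y | Monotone (y ∘ τ)} = {y | Monotone y} := by
    ext x
    simp only [mem_preimage, mem_ofPred_eq, hT]
  rw [hpre]
  congr 1 with x
  rw [← Equiv.prod_comp τ]
  exact Finset.prod_congr rfl fun i _ => congrArg g (congrFun (hT x) i)

variable {g}

lemma factorial_mul_setIntegral_monotone_le (hg0 : 0 ≤ g) (hg : Integrable g) :
    n ! * ∫ y in {y : Fin n → ℝ | Monotone y}, ∏ p, g (y p) ≤ (∫ t, g t) ^ n := by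
  let M : Equiv.Perm (Fin n) → Set (Fin n → ℝ) := fun τ => {y | Monotone (y ∘ τ)}
  have hM : ∀ τ, MeasurableSet (M τ) := fun τ =>
    ((isClosed_setOf_monotone n).preimage (f := fun y : Fin n → ℝ => y ∘ τ)
      (continuous_pi fun i => continuous_apply (τ i))).measurableSet
  -- two distinct permutations cannot both sort a tuple with distinct entries
  have hdisj : Pairwise fun τ τ' => AEDisjoint volume (M τ) (M τ') := fun τ τ' hne =>
    measure_mono_null (fun y (hy : y ∈ M τ ∩ M τ') (hinj : Function.Injective y) =>
      hne (Equiv.ext fun i => hinj (congrFun (Tuple.unique_monotone hy.1 hy.2) i)))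
      (ae_iff.1 (ae_injective n))
  have hF : Integrable (fun y : Fin n → ℝ => ∏ p, g (y p)) := Integrable.fintype_prod fun _ => hg
  calc n ! * ∫ y in {y : Fin n → ℝ | Monotone y}, ∏ p, g (y p)
      = ∑ τ, ∫ y in M τ, ∏ p, g (y p) := by
        simp [M, setIntegral_monotone_comp_perm, Fintype.card_perm]
    _ = ∫ y in ⋃ τ, M τ, ∏ p, g (y p) := by
        rw [integral_iUnion_ae (fun τ => (hM τ).nullMeasurableSet) hdisj hF.integrableOn,
          tsum_fintype]
    _ ≤ ∫ y : Fin n → ℝ, ∏ p, g (y p) :=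
        setIntegral_le_integral hF (ae_of_all _ fun y => Finset.prod_nonneg fun p _ => hg0 (y p))
    _ = (∫ t, g t) ^ n := by rw [integral_fintype_prod_volume_eq_pow, Fintype.card_fin]

end Simplex

section Phase

variable {σ : ℝ → ℝ} {a b : ℝ} {n : ℕ}

lemma measurableSet_simplex : MeasurableSet (simplex a b n) := by
  have : simplex a b n = {y | Monotone y} ∩ univ.pi fun _ => Icc a b := by
    ext y
    simp only [simplex, mem_inter_iff, mem_ofPred_eq, mem_univ_pi]
  rw [this]
  exact (isClosed_setOf_monotone n).measurableSet.inter
    (MeasurableSet.univ_pi fun _ => measurableSet_Icc)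

lemma nodes_mem_Icc (hab : a ≤ b) {y : Fin n → ℝ} (hy : y ∈ simplex a b n) (p : ℕ) :
    nodes a b n y p ∈ Icc a b := by
  unfold nodes
  split_ifs
  exacts [hy.2 _, left_mem_Icc.2 hab, right_mem_Icc.2 hab]

lemma continuous_nodes (a b : ℝ) (n p : ℕ) : Continuous fun y : Fin n → ℝ => nodes a b n y p := by
  unfold nodes
  split_ifs
  exacts [continuous_apply _, continuous_const, continuous_const]

lemma continuousOn_phase (hab : a ≤ b) (hσ : IntegrableOn (fun ξ => 1 / σ ξ) (Icc a b)) :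
    ContinuousOn (phase σ a b n) (simplex a b n) := by
  let F : ℝ → ℝ := fun u => ∫ ξ in a..u, 1 / σ ξ
  have hF : ContinuousOn F (Icc a b) := by
    simpa [uIcc_of_le hab] using
      intervalIntegral.continuousOn_primitive_interval (a := a) (b := b) (by rwa [uIcc_of_le hab])
  have hint : ∀ c ∈ Icc a b, IntervalIntegrable (fun ξ => 1 / σ ξ) volume a c := fun c hc =>
    (hσ.mono_set (uIcc_subset_Icc (left_mem_Icc.2 hab) hc)).intervalIntegrable
  have hnode : ∀ p, ContinuousOn (fun y => F (nodes a b n y p)) (simplex a b n) := fun p =>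
    hF.comp (continuous_nodes a b n p).continuousOn fun y hy => nodes_mem_Icc hab hy p
  refine ContinuousOn.congr (f := fun y => ∑ p ∈ Finset.range (n + 1),
      (-1 : ℝ) ^ p * (F (nodes a b n y (p + 1)) - F (nodes a b n y p)))
    (continuousOn_finsetSum _ fun p _ => continuousOn_const.mul ((hnode _).sub (hnode _)))
    fun y hy => ?_
  refine Finset.sum_congr rfl fun p _ => congrArg _ ?_
  exact (intervalIntegral.integral_interval_sub_left (hint _ (nodes_mem_Icc hab hy _))
    (hint _ (nodes_mem_Icc hab hy _))).symm

lemma abs_phase_le {C : ℝ} (hab : a ≤ b) (hC : ∀ ξ ∈ Icc a b, ‖1 / σ ξ‖ ≤ C)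
    {y : Fin n → ℝ} (hy : y ∈ simplex a b n) : |phase σ a b n y| ≤ (n + 1) * (C * (b - a)) := by
  have hterm : ∀ p ∈ Finset.range (n + 1),
      |(-1 : ℝ) ^ p * ∫ ξ in (nodes a b n y p)..(nodes a b n y (p + 1)), 1 / σ ξ| ≤
        C * (b - a) := by
    intro p _
    have hc := nodes_mem_Icc hab hy p
    have hd := nodes_mem_Icc hab hy (p + 1)
    rw [abs_mul, abs_neg_one_pow, one_mul, ← Real.norm_eq_abs]
    refine (intervalIntegral.norm_integral_le_of_norm_le_const fun ξ hξ =>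
      hC ξ (uIcc_subset_Icc hc hd (uIoc_subset_uIcc hξ))).trans ?_
    have hC0 : 0 ≤ C := (norm_nonneg _).trans (hC a (left_mem_Icc.2 hab))
    gcongr
    rw [abs_sub_le_iff]
    constructor <;> linarith [hc.1, hc.2, hd.1, hd.2]
  refine (Finset.abs_sum_le_sum_abs _ _).trans ((Finset.sum_le_card_nsmul _ _ _ hterm).trans ?_)
  simp

end Phase

section Amplitude

variable {r : ℝ → ℝ} {a b : ℝ} {n : ℕ}

lemma prod_indicator_Icc_of_mem_simplex {y : Fin n → ℝ} (hy : y ∈ simplex a b n) (f : ℝ → ℝ) :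
    ∏ p, (Icc a b).indicator f (y p) = ∏ p, f (y p) :=
  Finset.prod_congr rfl fun p _ => indicator_of_mem (hy.2 p) f

lemma integrableOn_simplex_prod (hr : IntegrableOn r (Icc a b)) :
    IntegrableOn (fun y : Fin n → ℝ => ∏ p, r (y p)) (simplex a b n) :=
  (Integrable.fintype_prod fun _ => (integrable_indicator_iff measurableSet_Icc).2 hr)
    |>.integrableOn.congr_fun (fun _ hy => prod_indicator_Icc_of_mem_simplex hy r)
      measurableSet_simplex

lemma factorial_mul_setIntegral_simplex_prod_abs_le (hr : IntegrableOn r (Icc a b)) :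
    n ! * ∫ y in simplex a b n, ∏ p, |r (y p)| ≤ (∫ t in Icc a b, |r t|) ^ n := by
  let g := (Icc a b).indicator fun t => |r t|
  have hg0 : 0 ≤ g := indicator_nonneg fun t _ => abs_nonneg (r t)
  have hg : Integrable g := (integrable_indicator_iff measurableSet_Icc).2 hr.abs
  have hsimplex : ∫ y in simplex a b n, ∏ p, |r (y p)| ≤
      ∫ y in {y : Fin n → ℝ | Monotone y}, ∏ p, g (y p) := by
    refine le_of_eq_of_le (setIntegral_congr_fun measurableSet_simplex fun y hy =>
      (prod_indicator_Icc_of_mem_simplex hy fun t => |r t|).symm) ?_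
    exact setIntegral_mono_set (Integrable.fintype_prod fun _ => hg).integrableOn
      (ae_of_all _ fun y => Finset.prod_nonneg fun p _ => hg0 (y p))
      (ae_of_all _ fun _ hy => hy.1)
  calc n ! * ∫ y in simplex a b n, ∏ p, |r (y p)|
      ≤ n ! * ∫ y in {y : Fin n → ℝ | Monotone y}, ∏ p, g (y p) := by gcongr
    _ ≤ (∫ t, g t) ^ n := factorial_mul_setIntegral_monotone_le hg0 hg
    _ = (∫ t in Icc a b, |r t|) ^ n := by rw [integral_indicator measurableSet_Icc]

end Amplitude

section SeriesOfS

variable {σ : ℝ → ℝ} {a b C : ℝ}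

lemma differentiable_S (hab : a ≤ b) (hr : IntegrableOn (fun t => deriv σ t / σ t) (Icc a b))
    (hσ : IntegrableOn (fun ξ => 1 / σ ξ) (Icc a b)) (hC : ∀ ξ ∈ Icc a b, ‖1 / σ ξ‖ ≤ C)
    (n : ℕ) : Differentiable ℂ (S σ a b n) :=
  (differentiable_integral_mul_sin (integrableOn_simplex_prod hr).ofReal
    ((continuousOn_phase hab hσ).aestronglyMeasurable measurableSet_simplex)
    (ae_restrict_of_forall_mem measurableSet_simplex fun _ hy => abs_phase_le hab hC hy))
    |>.const_mul _

lemma norm_S_le (hab : a ≤ b) (hr : IntegrableOn (fun t => deriv σ t / σ t) (Icc a b))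
    (hC : ∀ ξ ∈ Icc a b, ‖1 / σ ξ‖ ≤ C) (n : ℕ) (k : ℂ) :
    ‖S σ a b n k‖ ≤ (2 ^ n)⁻¹ * ((∫ t in Icc a b, |deriv σ t / σ t|) ^ n / n !) *
      Real.exp (‖k‖ * ((n + 1) * (C * (b - a)))) := by
  have hamp : ∫ y in simplex a b n, ‖((∏ p, deriv σ (y p) / σ (y p) : ℝ) : ℂ)‖ ≤
      (∫ t in Icc a b, |deriv σ t / σ t|) ^ n / n ! := by
    simp only [Complex.norm_real, Real.norm_eq_abs, Finset.abs_prod]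
    rw [le_div_iff₀ (by positivity), mul_comm]
    exact factorial_mul_setIntegral_simplex_prod_abs_le hr
  rw [S, norm_mul, norm_inv, norm_pow, RCLike.norm_ofNat, mul_assoc]
  gcongr
  refine (norm_integral_mul_sin_le (integrableOn_simplex_prod hr).ofReal
    (ae_restrict_of_forall_mem measurableSet_simplex fun _ hy => abs_phase_le hab hC hy) k).trans ?_
  gcongr
  exact hamp

lemma tendstoUniformlyOn_sum_S (hab : a ≤ b)
    (hr : IntegrableOn (fun t => deriv σ t / σ t) (Icc a b))
    (hC : ∀ ξ ∈ Icc a b, ‖1 / σ ξ‖ ≤ C) {K : Set ℂ} (hK : IsCompact K) :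
    TendstoUniformlyOn (fun N k => ∑ n ∈ Finset.range N, S σ a b n k)
      (fun k => ∑' n, S σ a b n k) atTop K := by
  obtain ⟨R, hR⟩ := isBounded_iff_forall_norm_le.1 hK.isBounded
  set I := ∫ t in Icc a b, |deriv σ t / σ t|
  set L := C * (b - a)
  set E := Real.exp (R * L)
  have hL : 0 ≤ L := mul_nonneg ((norm_nonneg _).trans (hC a (left_mem_Icc.2 hab))) (by linarith)
  refine tendstoUniformlyOn_tsum_nat ((Real.summable_pow_div_factorial (I * E / 2)).mul_left E)
    fun n k hk => (norm_S_le hab hr hC n k).trans ?_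
  calc (2 ^ n)⁻¹ * (I ^ n / n !) * Real.exp (‖k‖ * ((n + 1) * L))
      ≤ (2 ^ n)⁻¹ * (I ^ n / n !) * E ^ (n + 1) := by
        have hk' := mul_le_mul_of_nonneg_right (hR k hk) (by positivity : 0 ≤ ((n : ℝ) + 1) * L)
        rw [← Real.exp_nat_mul]
        refine mul_le_mul_of_nonneg_left (Real.exp_le_exp.2 ?_) (by positivity)
        push_cast
        linarith
    _ = E * ((I * E / 2) ^ n / n !) := by rw [div_pow, mul_pow, pow_succ]; ring

end SeriesOfS

lemma differentiable_tsum_of_tendstoUniformlyOn_isCompact {f : ℕ → ℂ → ℂ}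
    (hf : ∀ n, Differentiable ℂ (f n))
    (h : ∀ K, IsCompact K → TendstoUniformlyOn (fun N k => ∑ n ∈ Finset.range N, f n k)
      (fun k => ∑' n, f n k) atTop K) :
    Differentiable ℂ fun k => ∑' n, f n k :=
  differentiableOn_univ.1 <|
    (tendstoLocallyUniformlyOn_univ.2 (tendstoLocallyUniformly_iff_forall_isCompact.2 h))
      |>.differentiableOn
        (Eventually.of_forall fun _ => (Differentiable.fun_sum fun n _ => hf n).differentiableOn)
        isOpen_univ

lemma continuousOn_of_sigmaAC {σ : ℝ → ℝ} (hσ : sigmaAC σ) : ContinuousOn σ (Icc 0 1) := by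
  have h := intervalIntegral.continuousOn_primitive_interval (a := 0) (b := 1)
    (by rw [uIcc_of_le zero_le_one]; exact hσ.1)
  rw [uIcc_of_le zero_le_one] at h
  exact (continuousOn_const.add h).congr fun x hx => hσ.2 x hx

/-- Analyticity of `S_n^{(a,b)}` and of `Δ`, with uniform convergence on
compact sets. -/
theorem stmt_14 (σ : ℝ → ℝ)
    (hσpos : ∀ x ∈ Set.Icc (0 : ℝ) 1, 0 < σ x)
    (hσAC : sigmaAC σ)
    (hratio : IntegrableOn (fun t => deriv σ t / σ t) (Set.Ioo 0 1)) :
    (∀ a b : ℝ, 0 ≤ a → a ≤ b → b ≤ 1 →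
      (∀ n : ℕ, Differentiable ℂ (fun k => S σ a b n k)) ∧
      (∀ K : Set ℂ, IsCompact K →
        TendstoUniformlyOn (fun N k => ∑ n ∈ Finset.range N, S σ a b n k)
          (fun k => ∑' n, S σ a b n k) atTop K)) ∧
    Differentiable ℂ (Δfun σ) := by
  have hσc := continuousOn_of_sigmaAC hσAC
  obtain ⟨x₀, hx₀, hmin⟩ := isCompact_Icc.exists_isMinOn (nonempty_Icc.2 zero_le_one) hσc
  have hinv : ContinuousOn (fun ξ => 1 / σ ξ) (Icc 0 1) :=
    continuousOn_const.div hσc fun x hx => (hσpos x hx).ne'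
  have hC : ∀ ξ ∈ Icc (0 : ℝ) 1, ‖1 / σ ξ‖ ≤ (σ x₀)⁻¹ := fun ξ hξ => by
    rw [Real.norm_eq_abs, abs_of_pos (one_div_pos.2 (hσpos ξ hξ)), one_div]
    exact inv_anti₀ (hσpos x₀ hx₀) (hmin hξ)
  have hr : IntegrableOn (fun t => deriv σ t / σ t) (Icc 0 1) := by
    rwa [integrableOn_Icc_iff_integrableOn_Ioo]
  refine ⟨fun a b ha hab hb => ?_, differentiable_tsum_of_tendstoUniformlyOn_isCompact
    (differentiable_S zero_le_one hr hinv.integrableOn_Icc hC)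
    fun K hK => tendstoUniformlyOn_sum_S zero_le_one hr hC hK⟩
  have hsub : Icc a b ⊆ Icc 0 1 := Icc_subset_Icc ha hb
  have hCab : ∀ ξ ∈ Icc a b, ‖1 / σ ξ‖ ≤ (σ x₀)⁻¹ := fun ξ hξ => hC ξ (hsub hξ)
  exact ⟨differentiable_S hab (hr.mono_set hsub) (hinv.integrableOn_Icc.mono_set hsub) hCab,
    fun K hK => tendstoUniformlyOn_sum_S hab (hr.mono_set hsub) hCab hK⟩
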